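/- Let (a_{nε})_{n∈ℕ,ε} be a weakly ρ-moderate net of complex numbers with class (a_n)_c ∈ ℂ~_c, and let r := rad(a_n)_c with representative r_ε := (limsup_{n→∞} |a_{nε}|^{1/n})^(−1). Then: (1) if Q, R ∈ ℕ are such that |a_{nε}| ≤ ρ_ε^(−nQ−R) for all n ∈ ℕ and ε small, then r_ε ≥ ρ_ε^Q for ε small; in particular r > 0 (indeed r ≥ dρ^Q); (2) if q ∈ ℝ~ and q < r, then there exists s ∈ ℝ~ with s > 0 and q < s ≤ r. -/

import Mathlib

open Filter

noncomputable section

/-- `P ε` holds for all ε small. -/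
def EvS (P : ℝ → Prop) : Prop := ∃ ε₀ : ℝ, 0 < ε₀ ∧ ε₀ ≤ 1 ∧ ∀ ε : ℝ, 0 < ε → ε ≤ ε₀ → P ε

theorem EvS.mono {P Q : ℝ → Prop} (h : EvS P) (h2 : ∀ ε, 0 < ε → ε ≤ 1 → P ε → Q ε) : EvS Q := by
  obtain ⟨e, he, he1, hP⟩ := h
  exact ⟨e, he, he1, fun ε hε hεe => h2 ε hε (hεe.trans he1) (hP ε hε hεe)⟩

theorem EvS.and {P Q : ℝ → Prop} (h : EvS P) (h' : EvS Q) : EvS fun ε => P ε ∧ Q ε := by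
  obtain ⟨e, he, he1, hP⟩ := h
  obtain ⟨e', he', he1', hQ⟩ := h'
  exact ⟨min e e', lt_min he he', le_trans (min_le_left _ _) he1, fun ε hε hm =>
    ⟨hP ε hε (le_trans hm (min_le_left _ _)), hQ ε hε (le_trans hm (min_le_right _ _))⟩⟩

/-- A gauge: a nonincreasing net of reals in (0,1] tending to 0. -/
structure Gauge where
  ρ : ℝ → ℝ
  pos : ∀ ε : ℝ, 0 < ε → ε ≤ 1 → 0 < ρ ε
  le_one : ∀ ε : ℝ, 0 < ε → ε ≤ 1 → ρ ε ≤ 1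
  anti : ∀ ε ε' : ℝ, 0 < ε → ε ≤ ε' → ε' ≤ 1 → ρ ε' ≤ ρ ε
  to_zero : Tendsto ρ (nhdsWithin 0 (Set.Ioi 0)) (nhds 0)

namespace Gauge

theorem evs_le (g : Gauge) {δ : ℝ} (hδ : 0 < δ) : EvS fun ε => g.ρ ε ≤ δ := by
  have h := g.to_zero.eventually_lt_const hδ
  rw [eventually_nhdsWithin_iff, Metric.eventually_nhds_iff] at h
  obtain ⟨e, he, hP⟩ := h
  refine ⟨min (e / 2) 1, by positivity, min_le_right _ _, fun ε hε hεe => ?_⟩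
  have hd : dist ε 0 < e := by
    rw [Real.dist_eq, sub_zero, abs_of_pos hε]
    have h1 : ε ≤ e / 2 := le_trans hεe (min_le_left _ _)
    linarith
  exact (hP hd (Set.mem_Ioi.mpr hε)).le

variable {𝕜 : Type} [RCLike 𝕜]

/-- ρ-moderate nets. -/
def Mod (g : Gauge) (x : ℝ → 𝕜) : Prop := ∃ N : ℕ, EvS fun ε => ‖x ε‖ ≤ g.ρ ε ^ (-(N : ℤ))

/-- ρ-negligible nets. -/
def Negl (g : Gauge) (x : ℝ → 𝕜) : Prop := ∀ q : ℕ, EvS fun ε => ‖x ε‖ ≤ g.ρ ε ^ q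

theorem Negl.mod {g : Gauge} {x : ℝ → 𝕜} (h : g.Negl x) : g.Mod x := by
  refine ⟨0, (h 0).mono fun ε hε hε1 hx => ?_⟩
  simpa using hx

theorem negl_sub_self (g : Gauge) (x : ℝ → 𝕜) : g.Negl fun ε => x ε - x ε := fun q =>
  ⟨1, one_pos, le_refl 1, fun ε hε hε1 => by
    simp only [sub_self, norm_zero]
    exact pow_nonneg (g.pos ε hε hε1).le q⟩

theorem negl_of_evs_eq (g : Gauge) {x y : ℝ → 𝕜} (h : EvS fun ε => x ε = y ε) :
    g.Negl fun ε => x ε - y ε := fun q => h.mono fun ε hε hε1 he => by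
  show ‖x ε - y ε‖ ≤ _
  rw [he, sub_self, norm_zero]; exact pow_nonneg (g.pos ε hε hε1).le q

theorem Negl.symm_sub {g : Gauge} {x y : ℝ → 𝕜} (h : g.Negl fun ε => x ε - y ε) :
    g.Negl fun ε => y ε - x ε := fun q => (h q).mono fun ε _ _ hx => by rwa [norm_sub_rev]

theorem Negl.add {g : Gauge} {x y : ℝ → 𝕜} (hx : g.Negl x) (hy : g.Negl y) :
    g.Negl fun ε => x ε + y ε := by
  intro q
  refine (((hx (q+1)).and (hy (q+1))).and (g.evs_le (by norm_num : (0:ℝ) < 1/2))).mono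
    fun ε hε hε1 h => ?_
  obtain ⟨⟨h1, h2⟩, h3⟩ := h
  have hρ := g.pos ε hε hε1
  calc ‖x ε + y ε‖ ≤ ‖x ε‖ + ‖y ε‖ := norm_add_le _ _
    _ ≤ g.ρ ε ^ (q+1) + g.ρ ε ^ (q+1) := add_le_add h1 h2
    _ = 2 * g.ρ ε * g.ρ ε ^ q := by ring
    _ ≤ 1 * g.ρ ε ^ q := by
        apply mul_le_mul_of_nonneg_right _ (pow_nonneg hρ.le q)
        linarith
    _ = g.ρ ε ^ q := one_mul _

theorem Negl.neg {g : Gauge} {y : ℝ → 𝕜} (hy : g.Negl y) : g.Negl fun ε => -(y ε) :=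
  fun q => (hy q).mono fun ε _ _ h => by
    show ‖-(y ε)‖ ≤ _
    rwa [norm_neg]

theorem Negl.sub {g : Gauge} {x y : ℝ → 𝕜} (hx : g.Negl x) (hy : g.Negl y) :
    g.Negl fun ε => x ε - y ε := by
  have h := hx.add hy.neg
  have heq : (fun ε => x ε + -(y ε)) = fun ε => x ε - y ε := by funext ε; ring
  rwa [heq] at h

theorem Negl.triangle {g : Gauge} {x y z : ℝ → 𝕜} (h1 : g.Negl fun ε => x ε - y ε)
    (h2 : g.Negl fun ε => y ε - z ε) : g.Negl fun ε => x ε - z ε := by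
  have h := h1.add h2
  have heq : (fun ε => (x ε - y ε) + (y ε - z ε)) = fun ε => x ε - z ε := by
    funext ε; ring
  rwa [heq] at h

end Gauge

namespace Gauge

variable {𝕜 : Type} [RCLike 𝕜]

theorem zpow_neg_le (g : Gauge) {ε : ℝ} (hε : 0 < ε) (hε1 : ε ≤ 1) {a b : ℕ} (h : a ≤ b) :
    g.ρ ε ^ (-(a:ℤ)) ≤ g.ρ ε ^ (-(b:ℤ)) := by
  apply zpow_le_zpow_right_of_le_one₀ (g.pos ε hε hε1) (g.le_one ε hε hε1)
  omega

theorem Mod.of_norm_le {g : Gauge} {x : ℝ → 𝕜} {y : ℝ → ℝ} (hy : g.Mod y)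
    (h : ∀ ε, 0 < ε → ε ≤ 1 → ‖x ε‖ ≤ |y ε|) : g.Mod x := by
  obtain ⟨N, hN⟩ := hy
  exact ⟨N, hN.mono fun ε hε hε1 hb => le_trans (h ε hε hε1) (by rwa [Real.norm_eq_abs] at hb)⟩

theorem Mod.add {g : Gauge} {x y : ℝ → 𝕜} (hx : g.Mod x) (hy : g.Mod y) :
    g.Mod fun ε => x ε + y ε := by
  obtain ⟨N, hN⟩ := hx; obtain ⟨M, hM⟩ := hy
  refine ⟨N + M + 1, ((hN.and hM).and (g.evs_le (by norm_num : (0:ℝ) < 1/2))).mono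
    fun ε hε hε1 h => ?_⟩
  obtain ⟨⟨h1, h2⟩, h3⟩ := h
  have hρ := g.pos ε hε hε1
  have e1 : g.ρ ε ^ (-(N:ℤ)) ≤ g.ρ ε ^ (-((N+M:ℕ):ℤ)) := g.zpow_neg_le hε hε1 (by omega)
  have e2 : g.ρ ε ^ (-(M:ℤ)) ≤ g.ρ ε ^ (-((N+M:ℕ):ℤ)) := g.zpow_neg_le hε hε1 (by omega)
  have key : g.ρ ε ^ (-((N+M:ℕ):ℤ)) = g.ρ ε ^ (-((N+M+1:ℕ):ℤ)) * g.ρ ε := by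
    rw [← zpow_add_one₀ hρ.ne']
    congr 1
    push_cast
    ring
  have hpos : (0:ℝ) < g.ρ ε ^ (-((N+M+1:ℕ):ℤ)) := zpow_pos hρ _
  calc ‖x ε + y ε‖ ≤ ‖x ε‖ + ‖y ε‖ := norm_add_le _ _
    _ ≤ g.ρ ε ^ (-((N+M:ℕ):ℤ)) + g.ρ ε ^ (-((N+M:ℕ):ℤ)) := add_le_add (h1.trans e1) (h2.trans e2)
    _ = 2 * g.ρ ε * g.ρ ε ^ (-((N+M+1:ℕ):ℤ)) := by rw [key]; ring
    _ ≤ 1 * g.ρ ε ^ (-((N+M+1:ℕ):ℤ)) := by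
        apply mul_le_mul_of_nonneg_right _ hpos.le
        linarith
    _ = g.ρ ε ^ (-((N+M+1:ℕ):ℤ)) := one_mul _

theorem Mod.neg {g : Gauge} {x : ℝ → 𝕜} (hx : g.Mod x) : g.Mod fun ε => -(x ε) := by
  obtain ⟨N, hN⟩ := hx
  exact ⟨N, hN.mono fun ε _ _ h => by rwa [norm_neg]⟩

theorem Mod.sub {g : Gauge} {x y : ℝ → 𝕜} (hx : g.Mod x) (hy : g.Mod y) :
    g.Mod fun ε => x ε - y ε := by
  have h := hx.add hy.neg
  have heq : (fun ε => x ε + -(y ε)) = fun ε => x ε - y ε := by funext ε; ring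
  rwa [heq] at h

theorem Mod.mul {g : Gauge} {x y : ℝ → 𝕜} (hx : g.Mod x) (hy : g.Mod y) :
    g.Mod fun ε => x ε * y ε := by
  obtain ⟨N, hN⟩ := hx; obtain ⟨M, hM⟩ := hy
  refine ⟨N + M, (hN.and hM).mono fun ε hε hε1 h => ?_⟩
  obtain ⟨h1, h2⟩ := h
  have hρ := g.pos ε hε hε1
  calc ‖x ε * y ε‖ = ‖x ε‖ * ‖y ε‖ := norm_mul _ _
    _ ≤ g.ρ ε ^ (-(N:ℤ)) * g.ρ ε ^ (-(M:ℤ)) :=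
        mul_le_mul h1 h2 (norm_nonneg _) (zpow_nonneg hρ.le _)
    _ = g.ρ ε ^ (-((N+M:ℕ):ℤ)) := by rw [← zpow_add₀ hρ.ne']; congr 1; push_cast; ring

theorem Mod.norm {g : Gauge} {x : ℝ → 𝕜} (hx : g.Mod x) : g.Mod fun ε => ‖x ε‖ := by
  obtain ⟨N, hN⟩ := hx
  exact ⟨N, hN.mono fun ε _ _ h => by rwa [norm_norm]⟩

theorem Negl.mul_mod {g : Gauge} {x y : ℝ → 𝕜} (hx : g.Negl x) (hy : g.Mod y) :
    g.Negl fun ε => x ε * y ε := by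
  obtain ⟨M, hM⟩ := hy
  intro q
  refine ((hx (q + M)).and hM).mono fun ε hε hε1 h => ?_
  obtain ⟨h1, h2⟩ := h
  have hρ := g.pos ε hε hε1
  calc ‖x ε * y ε‖ = ‖x ε‖ * ‖y ε‖ := norm_mul _ _
    _ ≤ g.ρ ε ^ (q+M) * g.ρ ε ^ (-(M:ℤ)) :=
        mul_le_mul h1 h2 (norm_nonneg _) (pow_nonneg hρ.le _)
    _ = g.ρ ε ^ q := by
        rw [← zpow_natCast (g.ρ ε) (q+M), ← zpow_add₀ hρ.ne', ← zpow_natCast (g.ρ ε) q]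
        congr 1; push_cast; ring

theorem mod_const (g : Gauge) (c : 𝕜) (hc : ‖c‖ ≤ 1) : g.Mod fun _ => c := by
  refine ⟨0, 1, one_pos, le_refl 1, fun ε hε hε1 => ?_⟩
  simpa using hc

theorem mod_pow (g : Gauge) (q : ℕ) : g.Mod fun ε => g.ρ ε ^ q := by
  refine ⟨0, 1, one_pos, le_refl 1, fun ε hε hε1 => ?_⟩
  have hρ := g.pos ε hε hε1
  show ‖g.ρ ε ^ q‖ ≤ _
  rw [Real.norm_eq_abs, abs_of_nonneg (pow_nonneg hρ.le q)]
  simpa using pow_le_one₀ hρ.le (g.le_one ε hε hε1)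

theorem mod_zpow_neg (g : Gauge) (q : ℕ) : g.Mod fun ε => g.ρ ε ^ (-(q:ℤ)) := by
  refine ⟨q, 1, one_pos, le_refl 1, fun ε hε hε1 => ?_⟩
  have hρ := g.pos ε hε hε1
  show ‖g.ρ ε ^ (-(q:ℤ))‖ ≤ _
  rw [Real.norm_eq_abs, abs_of_nonneg (zpow_nonneg hρ.le _)]

/-- Hypernatural moderateness. -/
def NMod (g : Gauge) (n : ℝ → ℕ) : Prop := g.Mod fun ε => (n ε : ℝ)

end Gauge

instance gSetoid (g : Gauge) (𝕜 : Type) [RCLike 𝕜] : Setoid {x : ℝ → 𝕜 // g.Mod x} where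
  r a b := g.Negl fun ε => a.1 ε - b.1 ε
  iseqv := ⟨fun a => g.negl_sub_self a.1, fun h => h.symm_sub, fun h h' => h.triangle h'⟩

instance natSetoid (g : Gauge) : Setoid {n : ℝ → ℕ // g.NMod n} where
  r a b := g.Negl fun ε => (a.1 ε : ℝ) - (b.1 ε : ℝ)
  iseqv := ⟨fun a => g.negl_sub_self _, fun h => h.symm_sub, fun h h' => h.triangle h'⟩

/-- The ring of Robinson-Colombeau generalized numbers (ℂ~ for 𝕜 = ℂ, ℝ~ for 𝕜 = ℝ). -/
abbrev GQ (g : Gauge) (𝕜 : Type) [RCLike 𝕜] := Quotient (gSetoid g 𝕜)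

abbrev Ct (g : Gauge) := GQ g ℂ
abbrev Rt (g : Gauge) := GQ g ℝ

/-- The set of hypernatural numbers ℕ~. -/
abbrev Nt (g : Gauge) := Quotient (natSetoid g)

def GQ.mk (g : Gauge) {𝕜 : Type} [RCLike 𝕜] (x : ℝ → 𝕜) (h : g.Mod x) : GQ g 𝕜 :=
  Quotient.mk (gSetoid g 𝕜) ⟨x, h⟩

/-- `x` is a representative of the generalized number `z`. -/
def IsRep (g : Gauge) {𝕜 : Type} [RCLike 𝕜] (x : ℝ → 𝕜) (z : GQ g 𝕜) : Prop :=
  ∃ h : g.Mod x, GQ.mk g x h = z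

def Nt.mk (g : Gauge) (n : ℝ → ℕ) (h : g.NMod n) : Nt g := Quotient.mk (natSetoid g) ⟨n, h⟩

def Nt.IsRep (g : Gauge) (n : ℝ → ℕ) (m : Nt g) : Prop := ∃ h : g.NMod n, Nt.mk g n h = m

/-- dρ^q as an element of ℝ~. -/
def Gauge.dpow (g : Gauge) (q : ℕ) : Rt g := GQ.mk g (fun ε => g.ρ ε ^ q) (g.mod_pow q)

/-- dρ^(−q) as an element of ℝ~. -/
def Gauge.dpowNeg (g : Gauge) (q : ℕ) : Rt g := GQ.mk g (fun ε => g.ρ ε ^ (-(q:ℤ))) (g.mod_zpow_neg q)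

def GQ.zero (g : Gauge) (𝕜 : Type) [RCLike 𝕜] : GQ g 𝕜 :=
  GQ.mk g (fun _ => 0) (g.mod_const 0 (by simp))

def GQ.one (g : Gauge) (𝕜 : Type) [RCLike 𝕜] : GQ g 𝕜 :=
  GQ.mk g (fun _ => 1) (g.mod_const 1 (by simp))

variable {𝕜 : Type} [RCLike 𝕜]

/-- Order relation on ℝ~ (via some representatives). -/
def Rt.le (g : Gauge) (x y : Rt g) : Prop :=
  ∃ a b : {u : ℝ → ℝ // g.Mod u}, Quotient.mk (gSetoid g ℝ) a = x ∧
    Quotient.mk (gSetoid g ℝ) b = y ∧ EvS fun ε => a.1 ε ≤ b.1 ε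

/-- Strict order relation on ℝ~: `x < y` iff `y − x ≥ dρ^m` for some m. -/
def Rt.lt (g : Gauge) (x y : Rt g) : Prop :=
  ∃ a b : {u : ℝ → ℝ // g.Mod u}, Quotient.mk (gSetoid g ℝ) a = x ∧
    Quotient.mk (gSetoid g ℝ) b = y ∧ ∃ m : ℕ, EvS fun ε => g.ρ ε ^ m ≤ b.1 ε - a.1 ε

/-- Order on ℕ~. -/
def Nt.le (g : Gauge) (m n : Nt g) : Prop :=
  ∃ a b : {k : ℝ → ℕ // g.NMod k}, Quotient.mk (natSetoid g) a = m ∧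
    Quotient.mk (natSetoid g) b = n ∧ EvS fun ε => a.1 ε ≤ b.1 ε

/-- The relation `|z − w| < r` between generalized numbers, r ∈ ℝ~. -/
def GQ.absLt (g : Gauge) (z w : GQ g 𝕜) (r : Rt g) : Prop :=
  ∃ a b : {x : ℝ → 𝕜 // g.Mod x}, ∃ u : {x : ℝ → ℝ // g.Mod x},
    Quotient.mk (gSetoid g 𝕜) a = z ∧ Quotient.mk (gSetoid g 𝕜) b = w ∧
    Quotient.mk (gSetoid g ℝ) u = r ∧
    ∃ m : ℕ, EvS fun ε => ‖a.1 ε - b.1 ε‖ + g.ρ ε ^ m ≤ u.1 ε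

/-- The relation `|z − w| ≤ r`. -/
def GQ.absLe (g : Gauge) (z w : GQ g 𝕜) (r : Rt g) : Prop :=
  ∃ a b : {x : ℝ → 𝕜 // g.Mod x}, ∃ u : {x : ℝ → ℝ // g.Mod x},
    Quotient.mk (gSetoid g 𝕜) a = z ∧ Quotient.mk (gSetoid g 𝕜) b = w ∧
    Quotient.mk (gSetoid g ℝ) u = r ∧ EvS fun ε => ‖a.1 ε - b.1 ε‖ ≤ u.1 ε

/-- `x ∈ ℂ~` is invertible. -/
def GQ.Invertible (g : Gauge) (x : GQ g 𝕜) : Prop :=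
  ∃ a : {u : ℝ → 𝕜 // g.Mod u}, Quotient.mk (gSetoid g 𝕜) a = x ∧
    ∃ m : ℕ, EvS fun ε => g.ρ ε ^ m ≤ ‖a.1 ε‖

/-- l is the hyperlimit of the hypersequence a. -/
def HyperLim (g : Gauge) (a : Nt g → GQ g 𝕜) (l : GQ g 𝕜) : Prop :=
  ∀ q : ℕ, ∃ M : Nt g, ∀ n : Nt g, Nt.le g M n → GQ.absLt g (a n) l (g.dpow q)

/-- ρ-moderate over hypersums. -/
def Gauge.SMod (g : Gauge) (A : ℕ → ℝ → 𝕜) : Prop :=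
  ∀ N : ℝ → ℕ, g.NMod N → g.Mod fun ε => ∑ n ∈ Finset.range (N ε + 1), A n ε

/-- Hyperseries equivalence of coefficient nets. -/
def Gauge.SEquiv (g : Gauge) (A B : ℕ → ℝ → 𝕜) : Prop :=
  ∀ N M : ℝ → ℕ, g.NMod N → g.NMod M →
    g.Negl fun ε => ∑ n ∈ Finset.Icc (N ε) (M ε), (A n ε - B n ε)

theorem nat_eq_of_abs_sub_lt_one {a b : ℕ} (h : |(a:ℝ) - b| < 1) : a = b := by
  rcases lt_trichotomy a b with hlt | he | hgt
  · exfalso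
    have h1 : (a:ℝ) + 1 ≤ b := by exact_mod_cast Nat.succ_le_of_lt hlt
    have h2 := abs_lt.mp h
    linarith [h2.1]
  · exact he
  · exfalso
    have h1 : (b:ℝ) + 1 ≤ a := by exact_mod_cast Nat.succ_le_of_lt hgt
    have h2 := abs_lt.mp h
    linarith [h2.2]

theorem natEqEv (g : Gauge) {N M : ℝ → ℕ} (h : g.Negl fun ε => (N ε : ℝ) - M ε) :
    EvS fun ε => N ε = M ε := by
  refine ((h 1).and (g.evs_le (by norm_num : (0:ℝ) < 1/2))).mono fun ε hε hε1 hh => ?_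
  obtain ⟨h1, h2⟩ := hh
  apply nat_eq_of_abs_sub_lt_one
  have : ‖(N ε : ℝ) - M ε‖ = |(N ε : ℝ) - M ε| := Real.norm_eq_abs _
  rw [this] at h1
  calc |(N ε:ℝ) - M ε| ≤ g.ρ ε ^ 1 := h1
    _ = g.ρ ε := pow_one _
    _ ≤ 1/2 := h2
    _ < 1 := by norm_num

/-- Lift a representative-level construction indexed by hypernaturals to ℕ~. -/
def Nt.lift (g : Gauge) (F : (ℝ → ℕ) → ℝ → 𝕜)
    (hmod : ∀ N, g.NMod N → g.Mod (F N))
    (hcong : ∀ N M : ℝ → ℕ, EvS (fun ε => N ε = M ε) → EvS fun ε => F N ε = F M ε) :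
    Nt g → GQ g 𝕜 :=
  Quotient.lift (fun N => GQ.mk g (F N.1) (hmod N.1 N.2)) (by
    intro a b hab
    apply Quotient.sound
    exact g.negl_of_evs_eq (hcong a.1 b.1 (natEqEv g hab)))

def Nt.lift₂ (g : Gauge) (F : (ℝ → ℕ) → (ℝ → ℕ) → ℝ → 𝕜)
    (hmod : ∀ N M, g.NMod N → g.NMod M → g.Mod (F N M))
    (hcong : ∀ N N' M M' : ℝ → ℕ, EvS (fun ε => N ε = N' ε) → EvS (fun ε => M ε = M' ε) →
      EvS fun ε => F N M ε = F N' M' ε) :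
    Nt g → Nt g → GQ g 𝕜 :=
  Quotient.lift₂ (fun N M => GQ.mk g (F N.1 M.1) (hmod N.1 M.1 N.2 M.2)) (by
    intro a b a' b' ha hb
    apply Quotient.sound
    exact g.negl_of_evs_eq (hcong a.1 a'.1 b.1 b'.1 (natEqEv g ha) (natEqEv g hb)))

/-- The hypersequence of partial hypersums N ↦ Σ_{n=0}^{N} a_n. -/
def partialSum (g : Gauge) (A : ℕ → ℝ → 𝕜) (hA : g.SMod A) : Nt g → GQ g 𝕜 :=
  Nt.lift g (fun N ε => ∑ n ∈ Finset.range (N ε + 1), A n ε) (fun N hN => hA N hN)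
    (fun N M h => h.mono fun ε _ _ he => by simp only [he])

/-- The hyperseries Σ_{n∈ℕ~} a_n converges to s. -/
def HSConv (g : Gauge) (A : ℕ → ℝ → 𝕜) (hA : g.SMod A) (s : GQ g 𝕜) : Prop :=
  HyperLim g (partialSum g A hA) s

theorem Gauge.NMod.mono {g : Gauge} {a b : ℝ → ℕ} (hb : g.NMod b) (h : ∀ ε, a ε ≤ b ε) :
    g.NMod a := by
  refine Gauge.Mod.of_norm_le hb fun ε _ _ => ?_
  rw [Real.norm_eq_abs, abs_of_nonneg (Nat.cast_nonneg _), abs_of_nonneg (Nat.cast_nonneg _)]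
  exact_mod_cast h ε

theorem Gauge.SMod.range {g : Gauge} {A : ℕ → ℝ → 𝕜} (hA : g.SMod A) {N : ℝ → ℕ}
    (hN : g.NMod N) : g.Mod fun ε => ∑ n ∈ Finset.range (N ε), A n ε := by
  have hN' : g.NMod fun ε => N ε - 1 := hN.mono fun ε => Nat.sub_le _ _
  obtain ⟨K, hK⟩ := hA _ hN'
  refine ⟨K, hK.mono fun ε hε hε1 h => ?_⟩
  rcases Nat.eq_zero_or_pos (N ε) with h0 | h0
  · show ‖∑ n ∈ Finset.range (N ε), A n ε‖ ≤ _
    rw [h0]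
    simp only [Finset.range_zero, Finset.sum_empty, norm_zero]
    exact le_trans (norm_nonneg _) h
  · have he : N ε - 1 + 1 = N ε := Nat.succ_pred_eq_of_pos h0
    show ‖∑ n ∈ Finset.range (N ε), A n ε‖ ≤ _
    rw [← he]
    exact h

theorem Gauge.SMod.termMod {g : Gauge} {A : ℕ → ℝ → 𝕜} (hA : g.SMod A) {N : ℝ → ℕ}
    (hN : g.NMod N) : g.Mod fun ε => A (N ε) ε := by
  have h := (hA N hN).sub (hA.range hN)
  have heq : (fun ε => (∑ n ∈ Finset.range (N ε + 1), A n ε) -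
      ∑ n ∈ Finset.range (N ε), A n ε) = fun ε => A (N ε) ε := by
    funext ε
    rw [Finset.sum_range_succ]
    ring
  rwa [heq] at h

/-- The extension of the terms of a hyperseries to ℕ~ : n ↦ a_n. -/
def GQ.term (g : Gauge) (A : ℕ → ℝ → 𝕜) (hA : g.SMod A) : Nt g → GQ g 𝕜 :=
  Nt.lift g (fun N ε => A (N ε) ε) (fun _ hN => hA.termMod hN)
    (fun N M h => h.mono fun ε _ _ he => by simp only [he])

theorem norm_sum_Icc_le (A : ℕ → 𝕜) (N M : ℕ) :
    ‖∑ n ∈ Finset.Icc N M, A n‖ ≤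
      ‖∑ n ∈ Finset.range (M+1), A n‖ + ‖∑ n ∈ Finset.range N, A n‖ := by
  rcases le_or_gt N (M+1) with h | h
  · have key : (∑ n ∈ Finset.range N, A n) + (∑ n ∈ Finset.Icc N M, A n)
        = ∑ n ∈ Finset.range (M+1), A n := by
      rw [Finset.range_eq_Ico, Finset.range_eq_Ico, ← Finset.Ico_add_one_right_eq_Icc]
      exact Finset.sum_Ico_consecutive A (Nat.zero_le N) h
    have heq : ∑ n ∈ Finset.Icc N M, A n
        = (∑ n ∈ Finset.range (M+1), A n) - ∑ n ∈ Finset.range N, A n := by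
      rw [← key]; ring
    rw [heq]
    exact norm_sub_le _ _
  · rw [Finset.Icc_eq_empty (by omega)]
    simp only [Finset.sum_empty, norm_zero]
    positivity

theorem Gauge.SMod.IccMod {g : Gauge} {A : ℕ → ℝ → 𝕜} (hA : g.SMod A) {N M : ℝ → ℕ}
    (hN : g.NMod N) (hM : g.NMod M) :
    g.Mod fun ε => ∑ n ∈ Finset.Icc (N ε) (M ε), A n ε := by
  have h1 := (hA M hM).norm
  have h2 := (hA.range hN).norm
  refine Gauge.Mod.of_norm_le (h1.add h2) fun ε _ _ => ?_
  have hnn : (0:ℝ) ≤ ‖∑ n ∈ Finset.range (M ε + 1), A n ε‖ + ‖∑ n ∈ Finset.range (N ε), A n ε‖ :=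
    add_nonneg (norm_nonneg _) (norm_nonneg _)
  rw [abs_of_nonneg hnn]
  exact norm_sum_Icc_le _ _ _

/-- The hypersum Σ_{n=N}^{M} a_n as a function of N, M ∈ ℕ~. -/
def hypersum (g : Gauge) (A : ℕ → ℝ → 𝕜) (hA : g.SMod A) : Nt g → Nt g → GQ g 𝕜 :=
  Nt.lift₂ g (fun N M ε => ∑ n ∈ Finset.Icc (N ε) (M ε), A n ε)
    (fun _ _ hN hM => hA.IccMod hN hM)
    (fun N N' M M' h h' => (h.and h').mono fun ε _ _ he => by
      simp only [he.1, he.2])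

theorem Gauge.NMod.add {g : Gauge} {a b : ℝ → ℕ} (ha : g.NMod a) (hb : g.NMod b) :
    g.NMod fun ε => a ε + b ε := by
  have h := Gauge.Mod.add (𝕜 := ℝ) ha hb
  show g.Mod fun ε => ((a ε + b ε : ℕ) : ℝ)
  have heq : (fun ε => ((a ε + b ε : ℕ) : ℝ)) = fun ε => ((a ε : ℝ) + (b ε : ℝ)) := by
    funext ε; push_cast; ring
  rwa [heq]

/-- Addition on ℕ~. -/
def Nt.add (g : Gauge) : Nt g → Nt g → Nt g :=
  Quotient.lift₂ (fun a b => Nt.mk g (fun ε => a.1 ε + b.1 ε) (a.2.add b.2)) (by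
    intro a b a' b' ha hb
    apply Quotient.sound
    have h := ((natEqEv g ha).and (natEqEv g hb))
    exact g.negl_of_evs_eq (h.mono fun ε _ _ he => by
      show ((a.1 ε + b.1 ε : ℕ) : ℝ) = ((a'.1 ε + b'.1 ε : ℕ) : ℝ)
      rw [he.1, he.2]))

/-- Subtraction on generalized numbers. -/
def GQ.sub (g : Gauge) : GQ g 𝕜 → GQ g 𝕜 → GQ g 𝕜 :=
  Quotient.lift₂ (fun a b => GQ.mk g (fun ε => a.1 ε - b.1 ε) (a.2.sub b.2)) (by
    intro a b a' b' ha hb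
    apply Quotient.sound
    show g.Negl _
    have h := Gauge.Negl.sub ha hb
    have heq : (fun ε => (a.1 ε - a'.1 ε) - (b.1 ε - b'.1 ε))
        = fun ε => (a.1 ε - b.1 ε) - (a'.1 ε - b'.1 ε) := by funext ε; ring
    rwa [heq] at h)

/-- Multiplication on generalized numbers. -/
def GQ.mul (g : Gauge) : GQ g 𝕜 → GQ g 𝕜 → GQ g 𝕜 :=
  Quotient.lift₂ (fun a b => GQ.mk g (fun ε => a.1 ε * b.1 ε) (a.2.mul b.2)) (by
    intro a b a' b' ha hb
    apply Quotient.sound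
    show g.Negl _
    have h1 : g.Negl fun ε => (a.1 ε - a'.1 ε) * b.1 ε := Gauge.Negl.mul_mod ha b.2
    have h2 : g.Negl fun ε => (b.1 ε - b'.1 ε) * a'.1 ε := Gauge.Negl.mul_mod hb a'.2
    have h := h1.add h2
    have heq : (fun ε => (a.1 ε - a'.1 ε) * b.1 ε + (b.1 ε - b'.1 ε) * a'.1 ε)
        = fun ε => a.1 ε * b.1 ε - a'.1 ε * b'.1 ε := by funext ε; ring
    rwa [heq] at h)

/-- The absolute value |·| : ℂ~ → ℝ~. -/
def GQ.abs (g : Gauge) : GQ g 𝕜 → Rt g :=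
  Quotient.lift (fun a => GQ.mk g (fun ε => ‖a.1 ε‖) a.2.norm) (by
    intro a b hab
    apply Quotient.sound
    show g.Negl _
    intro q
    refine (hab q).mono fun ε _ _ h => ?_
    show ‖‖a.1 ε‖ - ‖b.1 ε‖‖ ≤ _
    rw [Real.norm_eq_abs]
    exact le_trans (abs_norm_sub_norm_le _ _) h)

/-- Weakly ρ-moderate coefficient nets. -/
def Gauge.WMod (g : Gauge) (a : ℕ → ℝ → ℂ) : Prop :=
  ∃ Q R : ℕ, EvS fun ε => ∀ n : ℕ, ‖a n ε‖ ≤ g.ρ ε ^ (-((n * Q + R : ℕ) : ℤ))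

/-- Strong ρ-equivalence of coefficient nets. -/
def Gauge.StrEquiv (g : Gauge) (a b : ℕ → ℝ → ℂ) : Prop :=
  ∀ q r : ℕ, EvS fun ε => ∀ n : ℕ, ‖a n ε - b n ε‖ ≤ g.ρ ε ^ (n * q + r)

/-- The net of radii of convergence r_ε = (limsup_n |a_{nε}|^{1/n})⁻¹ ∈ [0,∞]. -/
def radNet (a : ℕ → ℝ → ℂ) (ε : ℝ) : ENNReal :=
  (Filter.limsup (fun n : ℕ => ENNReal.ofReal (‖a n ε‖ ^ ((n : ℝ)⁻¹))) Filter.atTop)⁻¹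

/-- Condition (i): |z − c| < rad (a_n)_c, as classes (via representatives). -/
def RadLt (g : Gauge) (a : ℕ → ℝ → ℂ) (z c : Ct g) : Prop :=
  ∃ zr cr : ℝ → ℂ, ∃ a' : ℕ → ℝ → ℂ, IsRep g zr z ∧ IsRep g cr c ∧
    g.WMod a' ∧ g.StrEquiv a a' ∧
    ∃ m : ℕ, EvS fun ε => ENNReal.ofReal (‖zr ε - cr ε‖ + g.ρ ε ^ m) ≤ radNet a' ε

/-- The coefficient net of the hyper-power series Σ a_n (z−c)^n. -/
def PSeriesNet (a : ℕ → ℝ → ℂ) (zr cr : ℝ → ℂ) : ℕ → ℝ → ℂ :=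
  fun n ε => a n ε * (zr ε - cr ε) ^ n

/-- Conditions (ii)-(iv) of the definition of the set of convergence, for given
representatives. -/
def ConvConds (g : Gauge) (a : ℕ → ℝ → ℂ) (zr cr : ℝ → ℂ) (z : Ct g) : Prop :=
  ∃ hS : g.SMod (PSeriesNet a zr cr),
    (EvS fun ε => Summable fun n : ℕ => PSeriesNet a zr cr n ε) ∧
    (∃ hm : g.Mod fun ε => ∑' n : ℕ, PSeriesNet a zr cr n ε,
      HyperLim g (partialSum g _ hS) (GQ.mk g _ hm)) ∧
    (∀ zr' : ℝ → ℂ, IsRep g zr' z →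
      (EvS fun ε => Summable fun n : ℕ => (n : ℂ) * a n ε * (zr' ε - cr ε) ^ (n - 1)) ∧
      g.Mod fun ε => ∑' n : ℕ, (n : ℂ) * a n ε * (zr' ε - cr ε) ^ (n - 1))

/-- The set of convergence σ((a_n)_c, c) of a hyper-power series. -/
def convSet (g : Gauge) (a : ℕ → ℝ → ℂ) (c : Ct g) : Set (Ct g) :=
  { z | RadLt g a z c ∧
      ∃ zr cr : ℝ → ℂ, ∃ a' : ℕ → ℝ → ℂ, IsRep g zr z ∧ IsRep g cr c ∧
        g.WMod a' ∧ g.StrEquiv a a' ∧ ConvConds g a' zr cr z }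

/-- Sharply open subsets of ℂ~. -/
def SharplyOpen (g : Gauge) (U : Set (Ct g)) : Prop :=
  ∀ z ∈ U, ∃ r : Rt g, Rt.lt g (GQ.zero g ℝ) r ∧ ∀ w : Ct g, GQ.absLt g w z r → w ∈ U

/-- `P ε` for all small ε in L. -/
def EvSOn (L : Set ℝ) (P : ℝ → Prop) : Prop :=
  ∃ ε₀ : ℝ, 0 < ε₀ ∧ ε₀ ≤ 1 ∧ ∀ ε ∈ L, 0 < ε → ε ≤ ε₀ → P ε

/-- x ∈ ℂ~ is invertible on the subpoint L. -/
def GQ.InvertibleOn (g : Gauge) {𝕜 : Type} [RCLike 𝕜] (L : Set ℝ) (x : GQ g 𝕜) : Prop :=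
  ∃ a : {u : ℝ → 𝕜 // g.Mod u}, Quotient.mk (gSetoid g 𝕜) a = x ∧
    ∃ m : ℕ, EvSOn L fun ε => g.ρ ε ^ m ≤ ‖a.1 ε‖

theorem Gauge.nmod_const (g : Gauge) (c : ℕ) : g.NMod fun _ => c := by
  refine ⟨c + 1, (g.evs_le (by positivity : (0:ℝ) < 1/(c+1))).mono fun ε hε hε1 h3 => ?_⟩
  have hρ := g.pos ε hε hε1
  show ‖((c:ℕ) : ℝ)‖ ≤ _
  rw [Real.norm_eq_abs, abs_of_nonneg (Nat.cast_nonneg _)]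
  have hc1 : (0:ℝ) < (c:ℝ) + 1 := by positivity
  calc (c:ℝ) ≤ 1 / g.ρ ε := by
        rw [le_div_iff₀ hρ]
        calc (c:ℝ) * g.ρ ε ≤ (c:ℝ) * (1/(c+1)) :=
              mul_le_mul_of_nonneg_left h3 (Nat.cast_nonneg c)
          _ ≤ 1 := by rw [mul_one_div, div_le_one hc1]; linarith
    _ = g.ρ ε ^ (-((1:ℕ):ℤ)) := by
        rw [show (-((1:ℕ):ℤ)) = (-1:ℤ) by norm_num, zpow_neg_one, one_div]
    _ ≤ g.ρ ε ^ (-((c+1:ℕ):ℤ)) := g.zpow_neg_le hε hε1 (by omega)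

theorem Gauge.SMod.shift {g : Gauge} {𝕜 : Type} [RCLike 𝕜] {A : ℕ → ℝ → 𝕜}
    (hA : g.SMod A) (N₀ : ℕ) : g.SMod fun n ε => A (n + N₀) ε := by
  intro K hK
  have h1 := hA (fun ε => N₀ + K ε) ((g.nmod_const N₀).add hK)
  have h2 := hA.range (g.nmod_const N₀)
  have h := h1.sub h2
  have heq : (fun ε => (∑ n ∈ Finset.range (N₀ + K ε + 1), A n ε) -
      ∑ n ∈ Finset.range N₀, A n ε) = fun ε => ∑ n ∈ Finset.range (K ε + 1), A (n + N₀) ε := by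
    funext ε
    have e1 : (∑ n ∈ Finset.range N₀, A n ε) + (∑ n ∈ Finset.Ico N₀ (N₀ + K ε + 1), A n ε)
        = ∑ n ∈ Finset.range (N₀ + K ε + 1), A n ε :=
      Finset.sum_range_add_sum_Ico _ (by omega)
    have e2 : ∑ n ∈ Finset.Ico N₀ (N₀ + K ε + 1), A n ε
        = ∑ n ∈ Finset.range (K ε + 1), A (N₀ + n) ε := by
      rw [Finset.sum_Ico_eq_sum_range, show N₀ + K ε + 1 - N₀ = K ε + 1 by omega]
    rw [← e1, e2]
    rw [add_sub_cancel_left]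
    exact Finset.sum_congr rfl fun n _ => by rw [Nat.add_comm]
  rwa [heq] at h

theorem limsup_norm_rpow_inv_le {E : Type*} [SeminormedAddCommGroup E] {a : ℕ → E} {C x : ℝ}
    (hC : 0 < C) (hx : 0 ≤ x) (h : ∀ n, ‖a n‖ ≤ C * x ^ n) :
    limsup (fun n : ℕ => ENNReal.ofReal (‖a n‖ ^ (n : ℝ)⁻¹)) atTop ≤ ENNReal.ofReal x := by
  have hroot : Tendsto (fun n : ℕ => C ^ (n : ℝ)⁻¹ * x) atTop (nhds x) := by
    simpa using (tendsto_const_nhds.rpow tendsto_inv_atTop_nhds_zero_nat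
      (Or.inl hC.ne')).mul_const x
  have hle : ∀ n ≥ 1, ‖a n‖ ^ (n : ℝ)⁻¹ ≤ C ^ (n : ℝ)⁻¹ * x := by
    intro n hn
    have hn' : (n : ℝ) ≠ 0 := by positivity
    calc ‖a n‖ ^ (n : ℝ)⁻¹ ≤ (C * x ^ n) ^ (n : ℝ)⁻¹ :=
          Real.rpow_le_rpow (norm_nonneg _) (h n) (by positivity)
      _ = C ^ (n : ℝ)⁻¹ * x := by
          rw [Real.mul_rpow hC.le (by positivity), ← Real.rpow_natCast, ← Real.rpow_mul hx,
            mul_inv_cancel₀ hn', Real.rpow_one]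
  calc limsup (fun n : ℕ => ENNReal.ofReal (‖a n‖ ^ (n : ℝ)⁻¹)) atTop
      ≤ limsup (fun n : ℕ => ENNReal.ofReal (C ^ (n : ℝ)⁻¹ * x)) atTop :=
        limsup_le_limsup (eventually_atTop.2 ⟨1, fun n hn => ENNReal.ofReal_le_ofReal (hle n hn)⟩)
    _ = ENNReal.ofReal x := ((ENNReal.continuous_ofReal.tendsto x).comp hroot).limsup_eq

theorem ofReal_pow_le_radNet {a : ℕ → ℝ → ℂ} {ε c : ℝ} (hc : 0 < c) {Q R : ℕ}
    (h : ∀ n : ℕ, ‖a n ε‖ ≤ c ^ (-((n * Q + R : ℕ) : ℤ))) :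
    ENNReal.ofReal (c ^ Q) ≤ radNet a ε := by
  have hgeom : ∀ n : ℕ, ‖a n ε‖ ≤ (c ^ R)⁻¹ * ((c ^ Q)⁻¹) ^ n := fun n => by
    rw [inv_pow, ← mul_inv, ← pow_mul', ← pow_add, add_comm R, ← zpow_natCast, ← zpow_neg]
    exact h n
  have hlimsup := limsup_norm_rpow_inv_le (by positivity) (by positivity) hgeom
  rw [radNet, ENNReal.le_inv_iff_le_inv, ← ENNReal.ofReal_inv_of_pos (by positivity)]
  exact hlimsup

theorem Gauge.Mod.max {g : Gauge} {x y : ℝ → ℝ} (hx : g.Mod x) (hy : g.Mod y) :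
    g.Mod fun ε => max (x ε) (y ε) :=
  Gauge.Mod.of_norm_le (hx.norm.add hy.norm) fun ε _ _ => by
    simp only [Real.norm_eq_abs]
    rw [abs_of_nonneg (add_nonneg (abs_nonneg (x ε)) (abs_nonneg (y ε)))]
    exact abs_max_le_max_abs_abs.trans (max_le_add_of_nonneg (abs_nonneg _) (abs_nonneg _))

/-- the radius of convergence is bounded below by dρ^Q (in particular it is
strictly positive), and below any element < rad there is a positive real element ≤ rad. -/
theorem stmt10 (g : Gauge) (a : ℕ → ℝ → ℂ) (ha : g.WMod a) :
    (∀ Q R : ℕ, (EvS fun ε => ∀ n : ℕ, ‖a n ε‖ ≤ g.ρ ε ^ (-((n * Q + R : ℕ) : ℤ))) →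
      EvS fun ε => ENNReal.ofReal (g.ρ ε ^ Q) ≤ radNet a ε) ∧
    (∀ q : ℝ → ℝ, g.Mod q →
      (∃ m : ℕ, EvS fun ε => ENNReal.ofReal (q ε + g.ρ ε ^ m) ≤ radNet a ε) →
      ∃ s : ℝ → ℝ, g.Mod s ∧ (∃ m : ℕ, EvS fun ε => q ε + g.ρ ε ^ m ≤ s ε) ∧
        (∃ m : ℕ, EvS fun ε => g.ρ ε ^ m ≤ s ε) ∧
        EvS fun ε => ENNReal.ofReal (s ε) ≤ radNet a ε) := by
  have hrad : ∀ Q R : ℕ,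
      (EvS fun ε => ∀ n : ℕ, ‖a n ε‖ ≤ g.ρ ε ^ (-((n * Q + R : ℕ) : ℤ))) →
      EvS fun ε => ENNReal.ofReal (g.ρ ε ^ Q) ≤ radNet a ε :=
    fun Q R h => h.mono fun ε hε hε1 => ofReal_pow_le_radNet (g.pos ε hε hε1)
  refine ⟨hrad, ?_⟩
  rintro q hq ⟨m, hm⟩
  obtain ⟨Q, R, hQR⟩ := ha
  refine ⟨fun ε => max (q ε + g.ρ ε ^ m) (g.ρ ε ^ Q), (hq.add (g.mod_pow m)).max (g.mod_pow Q),
    ⟨m, 1, one_pos, le_rfl, fun ε _ _ => le_max_left _ _⟩,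
    ⟨Q, 1, one_pos, le_rfl, fun ε _ _ => le_max_right _ _⟩, ?_⟩
  refine (hm.and (hrad Q R hQR)).mono fun ε _ _ h => ?_
  rw [ENNReal.ofReal_max]
  exact max_le h.1 h.2
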